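/- arXiv:1207.2393 — 3 statements merged into one kernel-verified Lean document; each statement's English description precedes it below -/
import Mathlib

section
/- Let n and r be integers with 1 ≤ r ≤ n − 2, and let G be a finite simple graph of order n with edge connectivity exactly r. Then H(G) ≤ ((n−1)² + r)/2, with equality if and only if G is isomorphic to K(n−1,r). -/
open SimpleGraph

/-- The Harary index of a finite simple graph: sum of reciprocals of distances over
unordered pairs of distinct vertices (pairs at infinite distance contribute `0`,
since `SimpleGraph.dist` is `0` there and `1/0 = 0` in `ℝ`). -/
noncomputable def hararyIndex {V : Type*} [Fintype V] (G : SimpleGraph V) : ℝ :=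
  (∑ u : V, ∑ v : V, (1 : ℝ) / (G.dist u v)) / 2

/-- The graph `K(n-1, r)` on `n` vertices: a complete graph `K_{n-1}` on the first
`n - 1` vertices, together with one extra vertex (the last one) joined to exactly the
first `r` vertices of the `K_{n-1}`. -/
def Knr (n r : ℕ) : SimpleGraph (Fin n) :=
  SimpleGraph.fromRel (fun a b =>
    ((a : ℕ) < n - 1 ∧ (b : ℕ) < n - 1) ∨ ((a : ℕ) = n - 1 ∧ (b : ℕ) < r))

/-- The edge connectivity of `G`: the least number of edges whose deletion yields a
disconnected graph or a single vertex. -/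
noncomputable def edgeConnectivity {V : Type*} [Fintype V] (G : SimpleGraph V) : ℕ :=
  sInf {k | ∃ E : Set (Sym2 V), E ⊆ G.edgeSet ∧ E.ncard = k ∧
    (¬ (G.deleteEdges E).Connected ∨ Fintype.card V = 1)}

open Finset

lemma knr_adj (n r : ℕ) (a b : Fin n) :
    (Knr n r).Adj a b ↔ a ≠ b ∧ (((a:ℕ) < n-1 ∧ (b:ℕ) < n-1) ∨ ((a:ℕ) = n-1 ∧ (b:ℕ) < r)
      ∨ ((b:ℕ) = n-1 ∧ (a:ℕ) < r)) := by
  simp only [Knr, fromRel_adj]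
  tauto

lemma card_filter_fin_lt {n r : ℕ} (h : r ≤ n) :
    ((Finset.univ : Finset (Fin n)).filter (fun w : Fin n => (w:ℕ) < r)).card = r := by
  have he : (Finset.univ.filter fun w : Fin n => (w:ℕ) < r)
      = (Finset.range r).attachFin (fun m hm => lt_of_lt_of_le (Finset.mem_range.mp hm) h) := by
    ext a
    simp [Finset.mem_attachFin]
  rw [he, Finset.card_attachFin, Finset.card_range]

lemma dist_eq_two {V : Type*} {G : SimpleGraph V} {u w : V} (hne : u ≠ w) (hnadj : ¬ G.Adj u w)
    (z : V) (h1 : G.Adj u z) (h2 : G.Adj z w) : G.dist u w = 2 := by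
  have hle : G.dist u w ≤ 2 := by
    have := SimpleGraph.dist_le (Walk.cons h1 (Walk.cons h2 Walk.nil))
    simpa using this
  have h0 : G.dist u w ≠ 0 := by
    have hreach : G.Reachable u w := (Walk.cons h1 (Walk.cons h2 Walk.nil)).reachable
    exact (hreach.pos_dist_of_ne hne).ne'
  have h1' : G.dist u w ≠ 1 := fun h => hnadj (SimpleGraph.dist_eq_one_iff_adj.mp h)
  omega

section Aux
variable {V : Type*} [Fintype V] [DecidableEq V]

lemma nbhd_partition {G : SimpleGraph V} [DecidableRel G.Adj] (v : V) :
    G.degree v + (Finset.univ.filter (fun u => u ≠ v ∧ ¬ G.Adj v u)).card + 1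
      = Fintype.card V := by
  have h1 : (Finset.univ : Finset V).erase v
      = G.neighborFinset v ∪ Finset.univ.filter (fun u => u ≠ v ∧ ¬ G.Adj v u) := by
    ext u
    by_cases h : G.Adj v u
    · simp [mem_neighborFinset, h, h.ne']
    · simp [mem_neighborFinset, h]
  have h2 : Disjoint (G.neighborFinset v) (Finset.univ.filter fun u => u ≠ v ∧ ¬ G.Adj v u) := by
    rw [Finset.disjoint_left]
    intro a ha hb
    rw [mem_neighborFinset] at ha
    rw [Finset.mem_filter] at hb
    exact hb.2.2 ha
  have h3 := Finset.card_union_of_disjoint h2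
  rw [← h1, Finset.card_erase_of_mem (Finset.mem_univ v), Finset.card_univ] at h3
  have h4 : 1 ≤ Fintype.card V := Fintype.card_pos_iff.mpr ⟨v⟩
  rw [SimpleGraph.degree]
  omega

lemma D_card_eq {G : SimpleGraph V} [DecidableRel G.Adj] (v : V)
    (hall : ∀ p : V × V, p.1 ≠ p.2 → ¬ G.Adj p.1 p.2 → p.1 = v ∨ p.2 = v) :
    ((Finset.univ : Finset (V×V)).filter (fun p => p.1 ≠ p.2 ∧ ¬ G.Adj p.1 p.2)).card
      = 2 * ((Finset.univ.filter (fun u => u ≠ v ∧ ¬ G.Adj v u)).card) := by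
  have hdec : (Finset.univ : Finset (V×V)).filter (fun p => p.1 ≠ p.2 ∧ ¬ G.Adj p.1 p.2)
      = (Finset.univ.filter (fun u => u ≠ v ∧ ¬ G.Adj v u)).image (fun u => ((v, u) : V × V))
        ∪ (Finset.univ.filter (fun u => u ≠ v ∧ ¬ G.Adj v u)).image
            (fun u => ((u, v) : V × V)) := by
    ext p
    simp only [Finset.mem_filter, Finset.mem_univ, true_and, Finset.mem_union,
      Finset.mem_image]
    obtain ⟨p1, p2⟩ := p
    constructor
    · rintro ⟨hne, hnadj⟩
      rcases hall (p1, p2) hne hnadj with h | h <;> simp only at h <;> subst h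
      · exact Or.inl ⟨p2, ⟨hne.symm, hnadj⟩, rfl⟩
      · exact Or.inr ⟨p1, ⟨hne, fun hadj => hnadj hadj.symm⟩, rfl⟩
    · rintro (⟨u, hu, h⟩ | ⟨u, hu, h⟩) <;> obtain ⟨h1, h2⟩ := Prod.mk.injEq .. ▸ h <;>
        subst h1 <;> subst h2
      · exact ⟨fun h => hu.1 h.symm, hu.2⟩
      · exact ⟨hu.1, fun h => hu.2 h.symm⟩
  have hinj1 : Function.Injective (fun u => ((v, u) : V × V)) := fun a b h => by
    simpa using h
  have hinj2 : Function.Injective (fun u => ((u, v) : V × V)) := fun a b h => by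
    simpa using h
  have hdisj : Disjoint
      ((Finset.univ.filter (fun u => u ≠ v ∧ ¬ G.Adj v u)).image (fun u => ((v, u) : V × V)))
      ((Finset.univ.filter (fun u => u ≠ v ∧ ¬ G.Adj v u)).image (fun u => ((u, v) : V × V))) := by
    rw [Finset.disjoint_left]
    rintro p hp hq
    rw [Finset.mem_image] at hp hq
    obtain ⟨u, hu, rfl⟩ := hp
    obtain ⟨u', hu', h⟩ := hq
    rw [Finset.mem_filter] at hu'
    have : u' = v := by
      have := congrArg Prod.fst h
      simpa using this
    exact hu'.2.1 this
  rw [hdec, Finset.card_union_of_disjoint hdisj, Finset.card_image_of_injective _ hinj1,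
    Finset.card_image_of_injective _ hinj2]
  ring

end Aux

section Aux2
variable {V : Type*} [Fintype V] [DecidableEq V]

lemma term_le {G : SimpleGraph V} [DecidableRel G.Adj] (u w : V) :
    (1:ℝ)/(G.dist u w) ≤ (if u ≠ w then (1:ℝ) else 0)
      - (if u ≠ w ∧ ¬ G.Adj u w then (1:ℝ) else 0)/2 := by
  by_cases heq : u = w
  · subst heq
    simp [SimpleGraph.dist_self]
  by_cases hadj : G.Adj u w
  · rw [SimpleGraph.dist_eq_one_iff_adj.mpr hadj]
    simp [heq, hadj]
  · simp only [if_pos heq, if_pos (And.intro heq hadj)]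
    have h1 : G.dist u w ≠ 1 := fun h => hadj (SimpleGraph.dist_eq_one_iff_adj.mp h)
    rcases Nat.eq_zero_or_pos (G.dist u w) with h0 | h0
    · rw [h0]
      norm_num
    · have h2 : 2 ≤ G.dist u w := by omega
      have h2' : (2:ℝ) ≤ (G.dist u w : ℝ) := by exact_mod_cast h2
      rw [div_le_iff₀ (by linarith)]
      ring_nf
      nlinarith
    
lemma term_eq_of_dist_two {G : SimpleGraph V} [DecidableRel G.Adj] (u w : V)
    (h : u ≠ w → ¬ G.Adj u w → G.dist u w = 2) :
    (1:ℝ)/(G.dist u w) = (if u ≠ w then (1:ℝ) else 0)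
      - (if u ≠ w ∧ ¬ G.Adj u w then (1:ℝ) else 0)/2 := by
  by_cases heq : u = w
  · subst heq
    simp [SimpleGraph.dist_self]
  by_cases hadj : G.Adj u w
  · rw [SimpleGraph.dist_eq_one_iff_adj.mpr hadj]
    simp [heq, hadj]
  · rw [h heq hadj]
    simp only [if_pos heq, if_pos (And.intro heq hadj)]
    norm_num

lemma sum_g {G : SimpleGraph V} [DecidableRel G.Adj] {n : ℕ} (hcard : Fintype.card V = n) :
    ∑ u : V, ∑ w : V, ((if u ≠ w then (1:ℝ) else 0)
        - (if u ≠ w ∧ ¬ G.Adj u w then (1:ℝ) else 0)/2)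
      = (n:ℝ)*((n:ℝ)-1)
        - (((Finset.univ : Finset (V×V)).filter
            (fun p => p.1 ≠ p.2 ∧ ¬ G.Adj p.1 p.2)).card : ℝ)/2 := by
  have hsplit : ∀ u : V, ∑ w : V, ((if u ≠ w then (1:ℝ) else 0)
        - (if u ≠ w ∧ ¬ G.Adj u w then (1:ℝ) else 0)/2)
      = (∑ w : V, (if u ≠ w then (1:ℝ) else 0))
        - (∑ w : V, (if u ≠ w ∧ ¬ G.Adj u w then (1:ℝ) else 0))/2 := by
    intro u
    rw [Finset.sum_sub_distrib, Finset.sum_div]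
  have hA : ∀ u : V, (∑ w : V, (if u ≠ w then (1:ℝ) else 0)) = (n:ℝ) - 1 := by
    intro u
    rw [Finset.sum_boole]
    have : Finset.univ.filter (fun w => u ≠ w) = Finset.univ.erase u := by
      ext w
      simp [ne_comm, eq_comm]
    rw [this, Finset.card_erase_of_mem (Finset.mem_univ u), Finset.card_univ, hcard]
    have : 1 ≤ n := by
      rw [← hcard]
      exact Fintype.card_pos_iff.mpr ⟨u⟩
    push_cast [Nat.cast_sub this]
    ring
  calc ∑ u : V, ∑ w : V, ((if u ≠ w then (1:ℝ) else 0)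
        - (if u ≠ w ∧ ¬ G.Adj u w then (1:ℝ) else 0)/2)
      = ∑ u : V, ((∑ w : V, (if u ≠ w then (1:ℝ) else 0))
        - (∑ w : V, (if u ≠ w ∧ ¬ G.Adj u w then (1:ℝ) else 0))/2) := by
        exact Finset.sum_congr rfl (fun u _ => hsplit u)
    _ = (∑ u : V, ∑ w : V, (if u ≠ w then (1:ℝ) else 0))
        - (∑ u : V, ∑ w : V, (if u ≠ w ∧ ¬ G.Adj u w then (1:ℝ) else 0))/2 := by
        rw [Finset.sum_sub_distrib, Finset.sum_div]
    _ = (n:ℝ)*((n:ℝ)-1)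
        - (((Finset.univ : Finset (V×V)).filter
            (fun p => p.1 ≠ p.2 ∧ ¬ G.Adj p.1 p.2)).card : ℝ)/2 := by
        have h1 : (∑ u : V, ∑ w : V, (if u ≠ w then (1:ℝ) else 0)) = (n:ℝ)*((n:ℝ)-1) := by
          rw [Finset.sum_congr rfl (fun u _ => hA u), Finset.sum_const, Finset.card_univ, hcard,
            nsmul_eq_mul]
        have h2 : (∑ u : V, ∑ w : V, (if u ≠ w ∧ ¬ G.Adj u w then (1:ℝ) else 0))
            = (((Finset.univ : Finset (V×V)).filter
              (fun p => p.1 ≠ p.2 ∧ ¬ G.Adj p.1 p.2)).card : ℝ) := by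
          rw [← Fintype.sum_prod_type']
          rw [Finset.sum_boole]
        rw [h1, h2]

lemma harary_of_apex {n r : ℕ} (hr : 1 ≤ r) (hrn : r + 2 ≤ n) {G : SimpleGraph V}
    [DecidableRel G.Adj] (hcard : Fintype.card V = n) (v : V)
    (h1 : ∀ x y, x ≠ v → y ≠ v → x ≠ y → G.Adj x y) (h2 : G.degree v = r) :
    hararyIndex G = (((n:ℝ)-1)^2 + r)/2 := by
  -- every non-adjacent distinct pair involves v
  have hall : ∀ p : V × V, p.1 ≠ p.2 → ¬ G.Adj p.1 p.2 → p.1 = v ∨ p.2 = v := by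
    intro p hne hnadj
    by_contra hcon
    push_neg at hcon
    exact hnadj (h1 p.1 p.2 hcon.1 hcon.2 hne)
  -- distance 2 for non-adjacent distinct pairs
  have hdist2 : ∀ u w : V, u ≠ w → ¬ G.Adj u w → G.dist u w = 2 := by
    intro u w hne hnadj
    have hc : (G.neighborFinset v).card = r := by
      rw [SimpleGraph.card_neighborFinset_eq_degree]
      exact h2
    have hnbne : (G.neighborFinset v).Nonempty := by
      rw [← Finset.card_pos, hc]
      omega
    obtain ⟨z, hz⟩ := hnbne
    rw [mem_neighborFinset] at hz
    rcases hall (u, w) hne hnadj with h | h <;> simp only at h <;> subst h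
    · -- u = v
      have hzw : z ≠ w := fun h => hnadj (h ▸ hz)
      have hwv : w ≠ u := hne.symm
      exact dist_eq_two hne hnadj z hz (h1 z w hz.ne' hwv hzw)
    · -- w = v
      have hzu : z ≠ u := fun h => hnadj ((h ▸ hz).symm)
      exact dist_eq_two hne hnadj z (h1 u z hne hz.ne' hzu.symm) hz.symm
  have hterm : ∀ u w : V, (1:ℝ)/(G.dist u w) = (if u ≠ w then (1:ℝ) else 0)
      - (if u ≠ w ∧ ¬ G.Adj u w then (1:ℝ) else 0)/2 :=
    fun u w => term_eq_of_dist_two u w (hdist2 u w)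
  have hDv : (Finset.univ.filter (fun u => u ≠ v ∧ ¬ G.Adj v u)).card + r + 1 = n := by
    have := nbhd_partition (G := G) v
    rw [h2, hcard] at this
    omega
  have hD := D_card_eq v hall
  rw [hararyIndex]
  rw [Finset.sum_congr rfl (fun u _ => Finset.sum_congr rfl (fun w _ => hterm u w))]
  rw [sum_g hcard, hD]
  have hcast : ((Finset.univ.filter (fun u => u ≠ v ∧ ¬ G.Adj v u)).card : ℝ)
      = (n:ℝ) - r - 1 := by
    have : ((Finset.univ.filter (fun u => u ≠ v ∧ ¬ G.Adj v u)).card : ℝ) + r + 1 = n := by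
      exact_mod_cast congrArg (Nat.cast (R := ℝ)) hDv
    linarith
  push_cast
  rw [hcast]
  ring

end Aux2

section Aux3
variable {V : Type*} [Fintype V] [DecidableEq V]

lemma cut_data {n r : ℕ} (hr : 1 ≤ r) (hrn : r + 2 ≤ n) {G : SimpleGraph V}
    [DecidableRel G.Adj] (hcard : Fintype.card V = n) (hconn : edgeConnectivity G = r) :
    ∃ (S : Finset V) (CN : Finset (V × V)), S.Nonempty ∧ Sᶜ.Nonempty ∧
      (∀ p ∈ CN, p.1 ≠ p.2 ∧ ¬ G.Adj p.1 p.2) ∧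
      (∀ p ∈ CN, p.1 ∈ S ↔ p.2 ∉ S) ∧
      2 * S.card * Sᶜ.card ≤ 2 * r + CN.card := by
  classical
  -- extract a minimum edge cut
  have hne : {k | ∃ E : Set (Sym2 V), E ⊆ G.edgeSet ∧ E.ncard = k ∧
      (¬ (G.deleteEdges E).Connected ∨ Fintype.card V = 1)}.Nonempty := by
    by_contra hc
    rw [Set.not_nonempty_iff_eq_empty] at hc
    rw [edgeConnectivity, hc, Nat.sInf_empty] at hconn
    omega
  have hmem : r ∈ {k | ∃ E : Set (Sym2 V), E ⊆ G.edgeSet ∧ E.ncard = k ∧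
      (¬ (G.deleteEdges E).Connected ∨ Fintype.card V = 1)} := by
    rw [← hconn]
    exact Nat.sInf_mem hne
  obtain ⟨E, hEsub, hEcard, hEdisc⟩ := hmem
  have hn1 : Fintype.card V ≠ 1 := by omega
  have hnc : ¬ (G.deleteEdges E).Connected := hEdisc.resolve_right hn1
  have hVne : Nonempty V := Fintype.card_pos_iff.mp (by omega)
  have hpre : ¬ (G.deleteEdges E).Preconnected := fun h => hnc ⟨h⟩
  rw [SimpleGraph.Preconnected] at hpre
  push_neg at hpre
  obtain ⟨x, y, hxy⟩ := hpre
  set S : Finset V := Finset.univ.filter (fun u => (G.deleteEdges E).Reachable x u) with hS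
  have hxS : x ∈ S := by
    simp only [hS, Finset.mem_filter, Finset.mem_univ, true_and]
    exact SimpleGraph.Reachable.refl x
  have hyS : y ∉ S := by
    simp only [hS, Finset.mem_filter, Finset.mem_univ, true_and]
    exact hxy
  -- crossing adjacent pairs give edges of the cut
  have hcross : ∀ u w : V, u ∈ S → w ∉ S → G.Adj u w → s(u, w) ∈ E := by
    intro u w hu hw hadj
    by_contra hcon
    have hadj' : (G.deleteEdges E).Adj u w := by
      rw [SimpleGraph.deleteEdges_adj]
      exact ⟨hadj, hcon⟩
    simp only [hS, Finset.mem_filter, Finset.mem_univ, true_and] at hu hw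
    exact hw (hu.trans hadj'.reachable)
  -- the set of crossing pairs
  set C : Finset (V × V) := Finset.univ.filter (fun p : V × V => p.1 ∈ S ↔ p.2 ∉ S) with hC
  have hCcard : C.card = 2 * S.card * Sᶜ.card := by
    have hCeq : C = S ×ˢ Sᶜ ∪ Sᶜ ×ˢ S := by
      ext p
      simp only [hC, Finset.mem_filter, Finset.mem_univ, true_and, Finset.mem_union,
        Finset.mem_product, Finset.mem_compl]
      tauto
    have hdisj : Disjoint (S ×ˢ Sᶜ) (Sᶜ ×ˢ S) := by
      rw [Finset.disjoint_left]
      rintro p hp hq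
      rw [Finset.mem_product] at hp hq
      rw [Finset.mem_compl] at hq
      exact hq.1 hp.1
    rw [hCeq, Finset.card_union_of_disjoint hdisj, Finset.card_product, Finset.card_product]
    ring
  set CA : Finset (V × V) := C.filter (fun p => G.Adj p.1 p.2) with hCA
  set CN : Finset (V × V) := C.filter (fun p => ¬ G.Adj p.1 p.2) with hCN
  have hEfin : E.Finite := Set.toFinite E
  have hF : hEfin.toFinset.card = r := by
    rw [← Set.ncard_eq_toFinset_card _ hEfin]
    exact hEcard
  have hCAcard : CA.card ≤ 2 * r := by
    have himg : CA.image (fun p : V × V => s(p.1, p.2)) ⊆ hEfin.toFinset := by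
      intro e he
      rw [Finset.mem_image] at he
      obtain ⟨p, hp, rfl⟩ := he
      simp only [hCA, hC, Finset.mem_filter, Finset.mem_univ, true_and] at hp
      obtain ⟨hiff, hadj⟩ := hp
      rw [Set.Finite.mem_toFinset]
      by_cases h1 : p.1 ∈ S
      · exact hcross p.1 p.2 h1 (hiff.mp h1) hadj
      · have h2 : p.2 ∈ S := by
          by_contra h2
          exact h1 (hiff.mpr h2)
        have := hcross p.2 p.1 h2 h1 hadj.symm
        rwa [Sym2.eq_swap] at this
    have hfib : ∀ b ∈ CA.image (fun p : V × V => s(p.1, p.2)),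
        (CA.filter (fun p => s(p.1, p.2) = b)).card ≤ 2 := by
      intro b hb
      rw [Finset.mem_image] at hb
      obtain ⟨q, hq, rfl⟩ := hb
      have hsub : CA.filter (fun p => s(p.1, p.2) = s(q.1, q.2)) ⊆ {q, q.swap} := by
        intro p hp
        rw [Finset.mem_filter] at hp
        rw [Sym2.eq_iff] at hp
        rw [Finset.mem_insert, Finset.mem_singleton]
        rcases hp.2 with ⟨h1, h2⟩ | ⟨h1, h2⟩
        · left; exact Prod.ext h1 h2
        · right
          rw [Prod.ext_iff]
          exact ⟨h1, h2⟩
      calc (CA.filter (fun p => s(p.1, p.2) = s(q.1, q.2))).card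
          ≤ ({q, q.swap} : Finset (V × V)).card := Finset.card_le_card hsub
        _ ≤ 2 := Finset.card_insert_le _ _ |>.trans (by simp)
    calc CA.card ≤ 2 * (CA.image (fun p : V × V => s(p.1, p.2))).card :=
          Finset.card_le_mul_card_image CA 2 hfib
      _ ≤ 2 * hEfin.toFinset.card := by
          exact Nat.mul_le_mul_left 2 (Finset.card_le_card himg)
      _ = 2 * r := by rw [hF]
  have hsplit : CA.card + CN.card = C.card := Finset.card_filter_add_card_filter_not _
  refine ⟨S, CN, ⟨x, hxS⟩, ⟨y, Finset.mem_compl.mpr hyS⟩, ?_, ?_, ?_⟩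
  · intro p hp
    simp only [hCN, hC, Finset.mem_filter, Finset.mem_univ, true_and] at hp
    refine ⟨?_, hp.2⟩
    intro h
    rw [h] at hp
    tauto
  · intro p hp
    simp only [hCN, hC, Finset.mem_filter, Finset.mem_univ, true_and] at hp
    exact hp.1
  · omega

end Aux3

section Aux4
variable {V : Type*} [Fintype V] [DecidableEq V]

lemma iso_of_apex {n r : ℕ} (hr : 1 ≤ r) (hrn : r + 2 ≤ n) {G : SimpleGraph V}
    [DecidableRel G.Adj] (hcard : Fintype.card V = n) (v : V)
    (h1 : ∀ x y, x ≠ v → y ≠ v → x ≠ y → G.Adj x y) (h2 : G.degree v = r) :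
    Nonempty (G ≃g Knr n r) := by
  classical
  set N : Finset V := G.neighborFinset v with hNdef
  have hN : N.card = r := by
    rw [hNdef, SimpleGraph.card_neighborFinset_eq_degree]
    exact h2
  have hvN : v ∉ N := by
    simp [hNdef]
  set R : Finset V := Finset.univ \ insert v N with hRdef
  have hvR : v ∉ R := by
    simp [hRdef]
  have hR : R.card = n - (r + 1) := by
    rw [hRdef, Finset.card_sdiff_of_subset (Finset.subset_univ _), Finset.card_univ, hcard,
      Finset.card_insert_of_notMem hvN, hN]
  have hmemv : ∀ x : V, x ∉ N → x ∉ R → x = v := by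
    intro x hxN hxR
    rw [hRdef] at hxR
    simp only [Finset.mem_sdiff, Finset.mem_univ, true_and, not_not] at hxR
    rcases Finset.mem_insert.mp hxR with h | h
    · exact h
    · exact absurd h hxN
  let eN : ↥N ≃ Fin r := Finset.equivFinOfCardEq hN
  let eR : ↥R ≃ Fin (n - (r + 1)) := Finset.equivFinOfCardEq hR
  let f : V → Fin n := fun x =>
    if hx : x ∈ N then ⟨(eN ⟨x, hx⟩ : Fin r), by have := (eN ⟨x, hx⟩).isLt; omega⟩
    else if hx2 : x ∈ R then ⟨r + (eR ⟨x, hx2⟩ : Fin (n - (r+1))),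
      by have := (eR ⟨x, hx2⟩).isLt; omega⟩
    else ⟨n - 1, by omega⟩
  have hfN : ∀ x (hx : x ∈ N), (f x : ℕ) = (eN ⟨x, hx⟩ : Fin r) := by
    intro x hx
    simp only [f, dif_pos hx]
  have hfR : ∀ x (hx : x ∉ N) (hx2 : x ∈ R), (f x : ℕ) = r + (eR ⟨x, hx2⟩ : Fin (n - (r+1))) := by
    intro x hx hx2
    simp only [f, dif_neg hx, dif_pos hx2]
  have hfv : (f v : ℕ) = n - 1 := by
    simp only [f, dif_neg hvN, dif_neg hvR]
  -- value facts
  have hlt : ∀ x, x ≠ v → (f x : ℕ) < n - 1 := by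
    intro x hx
    by_cases hxN : x ∈ N
    · rw [hfN x hxN]
      have := (eN ⟨x, hxN⟩).isLt
      omega
    by_cases hxR : x ∈ R
    · rw [hfR x hxN hxR]
      have := (eR ⟨x, hxR⟩).isLt
      omega
    · exact absurd (hmemv x hxN hxR) hx
  have hltr : ∀ x, ((f x : ℕ) < r ↔ x ∈ N) := by
    intro x
    constructor
    · intro hlt'
      by_contra hxN
      by_cases hxR : x ∈ R
      · rw [hfR x hxN hxR] at hlt'
        omega
      · rw [hmemv x hxN hxR] at hlt'
        rw [hfv] at hlt'
        omega
    · intro hxN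
      rw [hfN x hxN]
      exact (eN ⟨x, hxN⟩).isLt
  have hinj : Function.Injective f := by
    intro x y hxy
    have hval : (f x : ℕ) = (f y : ℕ) := congrArg Fin.val hxy
    by_cases hx : x = v
    · by_cases hy : y = v
      · rw [hx, hy]
      · exfalso
        have := hlt y hy
        rw [hx, hfv] at hval
        omega
    · by_cases hy : y = v
      · exfalso
        have := hlt x hx
        rw [hy, hfv] at hval
        omega
      · -- both ≠ v
        by_cases hxN : x ∈ N
        · by_cases hyN : y ∈ N
          · rw [hfN x hxN, hfN y hyN] at hval
            have : eN ⟨x, hxN⟩ = eN ⟨y, hyN⟩ := Fin.ext hval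
            have := eN.injective this
            exact congrArg Subtype.val this
          · exfalso
            have h1' : (f x : ℕ) < r := (hltr x).mpr hxN
            have h2' : ¬ (f y : ℕ) < r := fun h => hyN ((hltr y).mp h)
            omega
        · by_cases hyN : y ∈ N
          · exfalso
            have h1' : (f y : ℕ) < r := (hltr y).mpr hyN
            have h2' : ¬ (f x : ℕ) < r := fun h => hxN ((hltr x).mp h)
            omega
          · have hxR : x ∈ R := by
              by_contra hxR
              exact hx (hmemv x hxN hxR)
            have hyR : y ∈ R := by
              by_contra hyR
              exact hy (hmemv y hyN hyR)
            rw [hfR x hxN hxR, hfR y hyN hyR] at hval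
            have : eR ⟨x, hxR⟩ = eR ⟨y, hyR⟩ := Fin.ext (by omega)
            have := eR.injective this
            exact congrArg Subtype.val this
  have hbij : Function.Bijective f := by
    rw [Fintype.bijective_iff_injective_and_card]
    exact ⟨hinj, by simp [hcard]⟩
  let e : V ≃ Fin n := Equiv.ofBijective f hbij
  have hadjiff : ∀ x y : V, (Knr n r).Adj (f x) (f y) ↔ G.Adj x y := by
    intro x y
    rw [knr_adj]
    by_cases hx : x = v
    · by_cases hy : y = v
      · rw [hx, hy]
        simp
      · rw [hx]
        have hGadj : G.Adj v y ↔ y ∈ N := by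
          rw [hNdef, mem_neighborFinset]
        have hne : f v ≠ f y := fun h => hy (hinj h).symm
        rw [hGadj]
        constructor
        · rintro ⟨-, (⟨ha, -⟩ | ⟨-, hb⟩ | ⟨hb, -⟩)⟩
          · rw [hfv] at ha
            omega
          · exact (hltr y).mp hb
          · exfalso
            have := hlt y hy
            omega
        · intro hyN
          exact ⟨hne, Or.inr (Or.inl ⟨hfv, (hltr y).mpr hyN⟩)⟩
    · by_cases hy : y = v
      · rw [hy]
        have hGadj : G.Adj x v ↔ x ∈ N := by
          rw [hNdef, mem_neighborFinset, SimpleGraph.adj_comm]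
        have hne : f x ≠ f v := fun h => hx (hinj h)
        rw [hGadj]
        constructor
        · rintro ⟨-, (⟨-, ha⟩ | ⟨ha, -⟩ | ⟨-, hb⟩)⟩
          · rw [hfv] at ha
            omega
          · exfalso
            have := hlt x hx
            omega
          · exact (hltr x).mp hb
        · intro hxN
          exact ⟨hne, Or.inr (Or.inr ⟨hfv, (hltr x).mpr hxN⟩)⟩
      · -- both ≠ v
        have hxlt := hlt x hx
        have hylt := hlt y hy
        constructor
        · rintro ⟨hne, -⟩
          have hxy : x ≠ y := fun h => hne (by rw [h])
          exact h1 x y hx hy hxy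
        · intro hadj
          have hxy : x ≠ y := hadj.ne
          exact ⟨fun h => hxy (hinj h), Or.inl ⟨hxlt, hylt⟩⟩
  exact ⟨⟨e, fun {a b} => hadjiff a b⟩⟩

lemma apex_of_iso {n r : ℕ} (hr : 1 ≤ r) (hrn : r + 2 ≤ n) {G : SimpleGraph V}
    [DecidableRel G.Adj] (hcard : Fintype.card V = n) (e : G ≃g Knr n r) :
    ∃ v : V, (∀ x y, x ≠ v → y ≠ v → x ≠ y → G.Adj x y) ∧ G.degree v = r := by
  classical
  have hn : 3 ≤ n := by omega
  set last : Fin n := ⟨n - 1, by omega⟩ with hlast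
  have hlastval : (last : ℕ) = n - 1 := rfl
  refine ⟨e.symm last, ?_, ?_⟩
  · intro x y hx hy hxy
    have hex : (e x : ℕ) ≠ n - 1 := by
      intro h
      apply hx
      have : e x = last := Fin.ext h
      rw [← this, RelIso.symm_apply_apply]
    have hey : (e y : ℕ) ≠ n - 1 := by
      intro h
      apply hy
      have : e y = last := Fin.ext h
      rw [← this, RelIso.symm_apply_apply]
    have hne : e x ≠ e y := fun h => hxy (e.toEquiv.injective h)
    have : (Knr n r).Adj (e x) (e y) := by
      rw [knr_adj]
      refine ⟨hne, Or.inl ⟨?_, ?_⟩⟩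
      · have := (e x).isLt
        omega
      · have := (e y).isLt
        omega
    exact e.map_rel_iff.mp this
  · have key : ∀ u : V, G.Adj (e.symm last) u ↔ ((e u : Fin n) : ℕ) < r := by
      intro u
      have h0 : G.Adj (e.symm last) u ↔ (Knr n r).Adj last (e u) := by
        conv_rhs => rw [show last = e (e.symm last) from (RelIso.apply_symm_apply e last).symm]
        exact e.map_rel_iff.symm
      rw [h0, knr_adj]
      constructor
      · rintro ⟨hne, (⟨ha, -⟩ | ⟨-, hb⟩ | ⟨-, hb⟩)⟩
        · omega
        · exact hb
        · omega
      · intro hlt'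
        refine ⟨?_, Or.inr (Or.inl ⟨rfl, hlt'⟩)⟩
        intro h
        have : ((last : Fin n) : ℕ) = (e u : ℕ) := congrArg Fin.val h
        omega
    have hnb : G.neighborFinset (e.symm last) = Finset.univ.filter (fun u => ((e u : Fin n) : ℕ) < r) := by
      ext u
      rw [mem_neighborFinset, Finset.mem_filter, key u]
      simp
    rw [SimpleGraph.degree, hnb]
    have hbij : (Finset.univ.filter (fun u => ((e u : Fin n) : ℕ) < r)).card
        = ((Finset.univ : Finset (Fin n)).filter (fun w : Fin n => (w : ℕ) < r)).card := by
      apply Finset.card_bij (fun u _ => e u)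
      · intro u hu
        rw [Finset.mem_filter] at hu ⊢
        exact ⟨Finset.mem_univ _, hu.2⟩
      · intro u _ u' _ h
        exact e.toEquiv.injective h
      · intro w hw
        rw [Finset.mem_filter] at hw
        refine ⟨e.symm w, ?_, ?_⟩
        · rw [Finset.mem_filter]
          refine ⟨Finset.mem_univ _, ?_⟩
          rw [RelIso.apply_symm_apply]
          exact hw.2
        · rw [RelIso.apply_symm_apply]
    rw [hbij, card_filter_fin_lt (by omega)]

end Aux4

lemma add_le_mul_succ (x y : ℕ) (hx : 1 ≤ x) (hy : 1 ≤ y) : x + y ≤ x * y + 1 := by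
  obtain ⟨x', rfl⟩ := Nat.exists_eq_add_of_le hx
  obtain ⟨y', rfl⟩ := Nat.exists_eq_add_of_le hy
  have hexp : (1 + x') * (1 + y') = 1 + x' + y' + x' * y' := by ring
  omega

/-- A graph of order `n` with edge connectivity `r` (`1 ≤ r ≤ n − 2`) satisfies
`H(G) ≤ ((n−1)² + r)/2`, with equality iff `G ≅ K(n−1, r)`. -/
theorem harary_le_of_edgeConnectivity (n r : ℕ) (hr : 1 ≤ r) (hrn : r + 2 ≤ n)
    {V : Type*} [Fintype V] (G : SimpleGraph V) (hcard : Fintype.card V = n)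
    (hconn : edgeConnectivity G = r) :
    hararyIndex G ≤ (((n : ℝ) - 1) ^ 2 + r) / 2 ∧
      (hararyIndex G = (((n : ℝ) - 1) ^ 2 + r) / 2 ↔ Nonempty (G ≃g Knr n r)) := by
  classical
  haveI : DecidableEq V := Classical.decEq V
  haveI : DecidableRel G.Adj := Classical.decRel _
  have hn3 : 3 ≤ n := by omega
  obtain ⟨S, CN, hSne, hScne, hCNprop, hCNcross, hcount⟩ := cut_data hr hrn hcard hconn
  set D : Finset (V × V) :=
    (Finset.univ : Finset (V × V)).filter (fun p => p.1 ≠ p.2 ∧ ¬ G.Adj p.1 p.2) with hDdef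
  have hCND : CN ⊆ D := fun p hp => Finset.mem_filter.mpr ⟨Finset.mem_univ _, hCNprop p hp⟩
  set a := S.card with hadef
  set b := Sᶜ.card with hbdef
  have hab : a + b = n := by
    rw [hadef, hbdef, Finset.card_add_card_compl, hcard]
  have ha : 1 ≤ a := hSne.card_pos
  have hb : 1 ≤ b := hScne.card_pos
  rw [mul_assoc] at hcount
  have hab1 : n ≤ a * b + 1 := by
    have := add_le_mul_succ a b ha hb
    omega
  have hCNDcard : CN.card ≤ D.card := Finset.card_le_card hCND
  have hD2 : 2 * n ≤ 2 * r + D.card + 2 := by omega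
  -- the global inequality on the double sum
  have hsum_le : ∑ u : V, ∑ w : V, (1:ℝ)/(G.dist u w)
      ≤ (n:ℝ)*((n:ℝ)-1) - (D.card : ℝ)/2 := by
    calc ∑ u : V, ∑ w : V, (1:ℝ)/(G.dist u w)
        ≤ ∑ u : V, ∑ w : V, ((if u ≠ w then (1:ℝ) else 0)
            - (if u ≠ w ∧ ¬ G.Adj u w then (1:ℝ) else 0)/2) :=
          Finset.sum_le_sum (fun u _ => Finset.sum_le_sum (fun w _ => term_le u w))
      _ = (n:ℝ)*((n:ℝ)-1) - (D.card : ℝ)/2 := sum_g hcard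
  have hDcast : (2:ℝ) * n ≤ 2 * r + (D.card : ℝ) + 2 := by exact_mod_cast hD2
  have hHle : hararyIndex G ≤ (((n : ℝ) - 1) ^ 2 + r) / 2 := by
    rw [hararyIndex]
    nlinarith [hsum_le, hDcast]
  refine ⟨hHle, ?_, ?_⟩
  · -- equality implies isomorphic to Knr
    intro heq
    rw [hararyIndex] at heq
    have hsum_eq : ∑ u : V, ∑ w : V, (1:ℝ)/(G.dist u w) = ((n:ℝ)-1)^2 + r := by
      linarith
    have hDle : (D.card : ℝ) ≤ 2*(n:ℝ) - 2 - 2*r := by nlinarith [hsum_le, hsum_eq]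
    have hDleN : D.card + 2*r + 2 ≤ 2*n := by
      have h' : ((D.card + 2*r + 2 : ℕ) : ℝ) ≤ ((2*n : ℕ) : ℝ) := by
        push_cast
        linarith
      exact_mod_cast h'
    have hDcard : D.card + 2*r + 2 = 2*n := by omega
    have hCNeq : CN = D := Finset.eq_of_subset_of_card_le hCND (by omega)
    have hab2 : a * b + 1 = n := by
      have := hCNeq ▸ hCNDcard
      omega
    have hab3 : a = 1 ∨ b = 1 := by
      by_contra hc
      push_neg at hc
      have ha2 : 2 ≤ a := by omega
      have hb2 : 2 ≤ b := by omega
      have h1 : 2*b ≤ a*b := Nat.mul_le_mul_right b ha2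
      have h2 : 2*a ≤ a*b := by
        calc 2*a = a*2 := by ring
          _ ≤ a*b := Nat.mul_le_mul_left a hb2
      omega
    -- find the special vertex v
    have hv : ∃ v : V, ∀ p ∈ D, p.1 = v ∨ p.2 = v := by
      rcases hab3 with h1 | h1
      · obtain ⟨v, hvS⟩ := Finset.card_eq_one.mp h1
        refine ⟨v, fun p hp => ?_⟩
        have hpCN : p ∈ CN := hCNeq ▸ hp
        have hiff := hCNcross p hpCN
        by_cases hp1 : p.1 ∈ S
        · left
          rw [hvS] at hp1
          exact Finset.mem_singleton.mp hp1
        · right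
          have : p.2 ∈ S := by
            by_contra h2
            exact hp1 (hiff.mpr h2)
          rw [hvS] at this
          exact Finset.mem_singleton.mp this
      · obtain ⟨v, hvS⟩ := Finset.card_eq_one.mp h1
        refine ⟨v, fun p hp => ?_⟩
        have hpCN : p ∈ CN := hCNeq ▸ hp
        have hiff := hCNcross p hpCN
        by_cases hp1 : p.1 ∈ S
        · right
          have h2 : p.2 ∈ Sᶜ := Finset.mem_compl.mpr (hiff.mp hp1)
          rw [hvS] at h2
          exact Finset.mem_singleton.mp h2
        · left
          have h2 : p.1 ∈ Sᶜ := Finset.mem_compl.mpr hp1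
          rw [hvS] at h2
          exact Finset.mem_singleton.mp h2
    obtain ⟨v, hv⟩ := hv
    have hall : ∀ p : V × V, p.1 ≠ p.2 → ¬ G.Adj p.1 p.2 → p.1 = v ∨ p.2 = v := by
      intro p hne hnadj
      exact hv p (Finset.mem_filter.mpr ⟨Finset.mem_univ _, hne, hnadj⟩)
    have apex1 : ∀ x y, x ≠ v → y ≠ v → x ≠ y → G.Adj x y := by
      intro x y hx hy hxy
      by_contra hnadj
      rcases hall (x, y) hxy hnadj with h | h
      · exact hx h
      · exact hy h
    have hDeq : D.card = 2 * ((Finset.univ.filter (fun u => u ≠ v ∧ ¬ G.Adj v u)).card) := by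
      rw [hDdef]
      exact D_card_eq v hall
    have hpart := nbhd_partition (G := G) v
    rw [hcard] at hpart
    have hdeg : G.degree v = r := by omega
    exact iso_of_apex hr hrn hcard v apex1 hdeg
  · -- isomorphic to Knr implies equality
    rintro ⟨e⟩
    obtain ⟨v, h1, h2⟩ := apex_of_iso hr hrn hcard e
    exact harary_of_apex hr hrn hcard v h1 h2
end

section
/- Let n ≥ 4 and r = n − 2. Let G be a finite simple graph of order n with vertex connectivity exactly r such that G is not isomorphic to K(n−1,r), and such that H(G′) ≤ H(G) for every graph G′ of order n with vertex connectivity exactly r that is not isomorphic to K(n−1,r) (i.e., G attains the second maximum Harary index among graphs of order n with vertex connectivity r). Then G is isomorphic to the graph obtained from the join K_{n−2} ∨ O_2 of the complete graph K_{n−2} with the empty graph O_2 on two vertices by deleting one edge lying inside K_{n−2}. -/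
open SimpleGraph

/-- The vertex connectivity of `G`: the least number of vertices whose deletion yields
a disconnected graph or a single vertex. -/
noncomputable def vertexConnectivity {V : Type*} [Fintype V] (G : SimpleGraph V) : ℕ :=
  sInf {k | ∃ S : Set V, S.ncard = k ∧
    (¬ (G.induce (Sᶜ : Set V)).Connected ∨ (Sᶜ : Set V).ncard = 1)}

/-- The join `K_{n-2} ∨ O_2` (the complete graph on the first `n - 2` vertices joined
to two independent vertices) with the edge between vertices `0` and `1` of the
`K_{n-2}` deleted. -/
def KO2minusEdge (n : ℕ) : SimpleGraph (Fin n) :=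
  SimpleGraph.fromRel (fun a b =>
    ((a : ℕ) < n - 2 ∧ (b : ℕ) < n - 2 ∧
      ¬ ((a : ℕ) = 0 ∧ (b : ℕ) = 1) ∧ ¬ ((a : ℕ) = 1 ∧ (b : ℕ) = 0)) ∨
    ((a : ℕ) < n - 2 ∧ n - 2 ≤ (b : ℕ)))

/-!
If `u` and `w` are both non-neighbours of `v`, deleting every other vertex isolates `v`; deleting
all but two non-adjacent vertices disconnects them; and when every vertex has at most one
non-neighbour, any three or more vertices induce a connected graph. Hence vertex connectivity
`n - 2` says exactly that `Gᶜ` is a nonempty matching. Non-adjacent vertices then have a common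
neighbour, so `H(G) = (n(n - 1) - m) / 2` with `m` the number of edges of `Gᶜ`. `K(n - 1, n - 2)`
is the case `m = 1` and `KO2minusEdge n` a case `m = 2`, so the second maximum forces `m = 2`;
and two graphs on `n` vertices whose complements are matchings with two edges are isomorphic.
-/

theorem Set.exists_mem_ne_ne_of_two_lt_ncard {α : Type*} {s : Set α} (hs : 2 < s.ncard)
    (a b : α) : ∃ c ∈ s, c ≠ a ∧ c ≠ b := by
  by_contra! h
  have hsub : s ⊆ {a, b} := fun c hc => by
    by_cases hca : c = a
    · exact Or.inl hca
    · exact Or.inr (h c hc hca)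
  have := (Set.ncard_le_ncard hsub).trans (Set.ncard_insert_le a {b})
  rw [Set.ncard_singleton] at this
  omega

theorem Fintype.exists_equiv_comp_eq {V W ι : Type*} [Fintype V] [Fintype W]
    (hcard : Fintype.card V = Fintype.card W) {f : ι → V} {g : ι → W}
    (hf : Function.Injective f) (hg : Function.Injective g) :
    ∃ e : V ≃ W, ∀ i, e (f i) = g i := by
  classical
  obtain ⟨σ⟩ := Fintype.card_eq.mp hcard
  have hext : ∀ i, Function.extend f g σ (f i) = g i := hf.extend_apply g σ
  obtain ⟨e, he⟩ := Set.MapsTo.exists_equiv_extend_of_card_eq (t := Finset.univ)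
    (by simpa using hcard) (s := Set.range f) (f := Function.extend f g σ)
    (fun _ _ => Finset.mem_coe.2 (Finset.mem_univ _))
    (by rintro _ ⟨i, rfl⟩ _ ⟨j, rfl⟩ hij; rw [hext, hext] at hij; rw [hg hij])
  exact ⟨e.trans (Equiv.subtypeUnivEquiv Finset.mem_univ), fun i => by
    simp [he _ (Set.mem_range_self i), hext]⟩

namespace SimpleGraph

variable {V W : Type*} {G : SimpleGraph V} {H : SimpleGraph W}

def Iso.compl (f : G ≃g H) : Gᶜ ≃g Hᶜ :=
  ⟨f.toEquiv, fun {a b} => by simp [f.map_adj_iff]⟩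

theorem Iso.ncard_edgeSet_eq (f : G ≃g H) : G.edgeSet.ncard = H.edgeSet.ncard := by
  rw [← Nat.card_coe_set_eq, ← Nat.card_coe_set_eq]
  exact Nat.card_congr f.mapEdgeSet

theorem nonempty_iso_of_image_compl_edgeSet (e : V ≃ W)
    (h : Sym2.map e '' Gᶜ.edgeSet = Hᶜ.edgeSet) : Nonempty (G ≃g H) := by
  refine ⟨⟨e, fun {a b} => ?_⟩⟩
  rcases eq_or_ne a b with rfl | hab
  · simp
  have hmem : s(e a, e b) ∈ Hᶜ.edgeSet ↔ s(a, b) ∈ Gᶜ.edgeSet := by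
    rw [← h, ← Sym2.map_mk, (Sym2.map.injective e.injective).mem_set_image]
  simpa [hab, e.injective.ne hab] using hmem.not

theorem nonempty_iso_of_compl_edgeSet_eq_image [Fintype V] [Fintype W]
    (hcard : Fintype.card V = Fintype.card W) {ι : Type*} {M : Set (Sym2 ι)} {f : ι → V}
    {g : ι → W} (hf : Function.Injective f) (hg : Function.Injective g)
    (hG : Gᶜ.edgeSet = Sym2.map f '' M) (hH : Hᶜ.edgeSet = Sym2.map g '' M) :
    Nonempty (G ≃g H) := by
  obtain ⟨e, he⟩ := Fintype.exists_equiv_comp_eq hcard hf hg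
  refine nonempty_iso_of_image_compl_edgeSet e ?_
  simp only [hG, hH, Set.image_image, Sym2.map_map, show ⇑e ∘ f = g from funext he]

theorem ne_of_adj_of_adj (hH : ∀ v, (G.neighborSet v).Subsingleton) {a b c d : V}
    (hab : G.Adj a b) (hcd : G.Adj c d) (hne : s(a, b) ≠ s(c, d)) :
    a ≠ c ∧ a ≠ d ∧ b ≠ c ∧ b ≠ d := by
  refine ⟨?_, ?_, ?_, ?_⟩ <;> rintro rfl
  · exact hne (by rw [hH a hab hcd])
  · exact hne (by rw [hH a hab hcd.symm, Sym2.eq_swap])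
  · exact hne (by rw [hH b hab.symm hcd, Sym2.eq_swap])
  · exact hne (by rw [hH b hab.symm hcd.symm])

theorem adj_of_compl_adj (hG : ∀ v, (Gᶜ.neighborSet v).Subsingleton) {u v w : V}
    (huv : Gᶜ.Adj u v) (hwu : w ≠ u) (hwv : w ≠ v) : G.Adj u w := by
  by_contra h
  exact hwv (hG u (show Gᶜ.Adj u w from ⟨hwu.symm, h⟩) huv)

theorem not_connected_induce_of_forall_not_adj {s : Set V} {u v : V} (hu : u ∈ s) (hv : v ∈ s)
    (huv : u ≠ v) (h : ∀ w ∈ s, ¬ G.Adj v w) : ¬ (G.induce s).Connected := by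
  intro hconn
  obtain ⟨p⟩ := hconn.preconnected ⟨v, hv⟩ ⟨u, hu⟩
  cases p with
  | nil => exact huv rfl
  | cons hadj _ => exact h _ (Subtype.mem _) hadj

theorem connected_induce_of_three_le_ncard (hG : ∀ v, (Gᶜ.neighborSet v).Subsingleton)
    [Finite V] {s : Set V} (hs : 3 ≤ s.ncard) : (G.induce s).Connected := by
  have : Nonempty s := (Set.nonempty_of_ncard_ne_zero (by omega)).to_subtype
  refine ⟨fun ⟨x, hx⟩ ⟨y, hy⟩ => ?_⟩
  by_cases hxy : G.Adj x y
  · exact Adj.reachable (by exact hxy)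
  rcases eq_or_ne x y with rfl | hne
  · rfl
  obtain ⟨w, hw, hwx, hwy⟩ := Set.exists_mem_ne_ne_of_two_lt_ncard (s := s) (by omega) x y
  have hc : Gᶜ.Adj x y := ⟨hne, hxy⟩
  have hxw : (G.induce s).Adj ⟨x, hx⟩ ⟨w, hw⟩ := adj_of_compl_adj hG hc hwx hwy
  have hwy' : (G.induce s).Adj ⟨w, hw⟩ ⟨y, hy⟩ := (adj_of_compl_adj hG hc.symm hwy hwx).symm
  exact hxw.reachable.trans hwy'.reachable

variable [Fintype V]

theorem dist_eq_two_of_compl_adj (hG : ∀ v, (Gᶜ.neighborSet v).Subsingleton)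
    (hV : 3 ≤ Fintype.card V) {u v : V} (huv : Gᶜ.Adj u v) : G.dist u v = 2 := by
  obtain ⟨w, -, hwu, hwv⟩ := Set.exists_mem_ne_ne_of_two_lt_ncard (s := Set.univ)
    (by rw [Set.ncard_univ, Nat.card_eq_fintype_card]; omega) u v
  have h2 : G.edist u v = 2 := edist_eq_two_iff.2 ⟨huv.ne, huv.2,
    w, adj_of_compl_adj hG huv hwu hwv, adj_of_compl_adj hG huv.symm hwv hwu⟩
  rw [dist, h2]
  rfl

theorem one_div_dist_eq (hG : ∀ v, (Gᶜ.neighborSet v).Subsingleton) [DecidableEq V]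
    [DecidableRel G.Adj] (hV : 3 ≤ Fintype.card V) (u v : V) :
    (1 : ℝ) / G.dist u v = (if u = v then 0 else 1) - (if Gᶜ.Adj u v then 1 / 2 else 0) := by
  rcases eq_or_ne u v with rfl | huv
  · simp
  by_cases hadj : G.Adj u v
  · simp [dist_eq_one_iff_adj.2 hadj, huv, hadj]
  · have hc : Gᶜ.Adj u v := ⟨huv, hadj⟩
    norm_num [dist_eq_two_of_compl_adj hG hV hc, huv, hc]

end SimpleGraph

section

variable {V : Type*} [Fintype V] {G : SimpleGraph V}

theorem hararyIndex_eq_of_subsingleton_neighborSet_compl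
    (hG : ∀ v, (Gᶜ.neighborSet v).Subsingleton) (hV : 3 ≤ Fintype.card V) :
    hararyIndex G = ((Fintype.card V : ℝ) * (Fintype.card V - 1) - Gᶜ.edgeSet.ncard) / 2 := by
  classical
  have hrow : ∀ u, ∑ v, (1 : ℝ) / G.dist u v = (Fintype.card V - 1) - Gᶜ.degree u / 2 := by
    intro u
    simp only [one_div_dist_eq hG hV, Finset.sum_sub_distrib, Finset.sum_ite, Finset.sum_const_zero, Finset.filter_ne, Finset.sum_const,
      Finset.mem_univ, Finset.card_erase_of_mem, Finset.card_univ, nsmul_eq_mul, mul_one, zero_add,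
      add_zero, ← card_neighborFinset_eq_degree, neighborFinset_eq_filter]
    rw [Nat.cast_pred (by omega)]
    ring
  have hedges : (Gᶜ.edgeSet.ncard : ℝ) = (∑ u, Gᶜ.degree u : ℕ) / 2 := by
    rw [sum_degrees_eq_twice_card_edges, ← coe_edgeFinset, Set.ncard_coe_finset]
    push_cast
    ring
  rw [hararyIndex, Finset.sum_congr rfl fun u _ => hrow u, hedges]
  push_cast
  rw [Finset.sum_sub_distrib, ← Finset.sum_div, Finset.sum_const, Finset.card_univ, nsmul_eq_mul]

theorem exists_ncard_eq_vertexConnectivity :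
    ∃ S : Set V, S.ncard = vertexConnectivity G ∧
      (¬ (G.induce Sᶜ).Connected ∨ Sᶜ.ncard = 1) := by
  have hne : {k | ∃ S : Set V, S.ncard = k ∧
      (¬ (G.induce Sᶜ).Connected ∨ Sᶜ.ncard = 1)}.Nonempty :=
    ⟨_, Set.univ, rfl, Or.inl fun h => by
      obtain ⟨⟨_, hx⟩⟩ := h.nonempty
      exact hx (Set.mem_univ _)⟩
  exact Nat.sInf_mem hne

theorem le_vertexConnectivity {k : ℕ}
    (h : ∀ S : Set V, S.ncard < k → (G.induce Sᶜ).Connected ∧ Sᶜ.ncard ≠ 1) :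
    k ≤ vertexConnectivity G := by
  obtain ⟨S, hS, hsep⟩ := exists_ncard_eq_vertexConnectivity (G := G)
  by_contra! hlt
  have := h S (hS ▸ hlt)
  tauto

theorem vertexConnectivity_le_of_not_connected {s : Set V} (h : ¬ (G.induce s).Connected) :
    vertexConnectivity G ≤ Fintype.card V - s.ncard := by
  have hle : vertexConnectivity G ≤ sᶜ.ncard :=
    Nat.sInf_le ⟨sᶜ, rfl, Or.inl (by rwa [compl_compl])⟩
  rwa [Set.ncard_compl, Nat.card_eq_fintype_card] at hle

theorem vertexConnectivity_le_card_sub_two {u v : V} (h : Gᶜ.Adj u v) :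
    vertexConnectivity G ≤ Fintype.card V - 2 := by
  simpa [Set.ncard_pair h.ne] using vertexConnectivity_le_of_not_connected (G := G)
    (not_connected_induce_of_forall_not_adj (s := {u, v}) (by simp) (by simp) h.ne
      (by rintro x (rfl | rfl) <;> simp_all [G.adj_comm]))

theorem vertexConnectivity_le_card_sub_three {u v w : V} (hu : Gᶜ.Adj v u) (hw : Gᶜ.Adj v w)
    (huw : u ≠ w) : vertexConnectivity G ≤ Fintype.card V - 3 := by
  have hcard : ({u, v, w} : Set V).ncard = 3 :=
    Set.ncard_eq_three.2 ⟨u, v, w, hu.ne.symm, huw, hw.ne, rfl⟩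
  simpa [hcard] using vertexConnectivity_le_of_not_connected (G := G)
    (not_connected_induce_of_forall_not_adj (s := {u, v, w}) (by simp) (by simp) hu.ne.symm
      (by rintro x (rfl | rfl | rfl) <;> simp_all))

theorem vertexConnectivity_eq_card_sub_two_iff (hV : 2 ≤ Fintype.card V) :
    vertexConnectivity G = Fintype.card V - 2 ↔
      (∀ v, (Gᶜ.neighborSet v).Subsingleton) ∧ Gᶜ.edgeSet.Nonempty := by
  constructor
  · intro hvc
    refine ⟨fun v u (hu : Gᶜ.Adj v u) w (hw : Gᶜ.Adj v w) => ?_, ?_⟩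
    · by_contra huw
      have := vertexConnectivity_le_card_sub_three hu hw huw
      have := Set.ncard_le_card ({u, v, w} : Set V)
      rw [Set.ncard_eq_three.2 ⟨u, v, w, hu.ne.symm, huw, hw.ne, rfl⟩,
        Nat.card_eq_fintype_card] at this
      omega
    · obtain ⟨S, hS, hsep⟩ := exists_ncard_eq_vertexConnectivity (G := G)
      have h2 : Sᶜ.ncard = 2 := by
        rw [Set.ncard_compl, Nat.card_eq_fintype_card, hS, hvc]
        omega
      obtain ⟨x, y, hxy, hxyS⟩ := Set.ncard_eq_two.1 h2
      refine ⟨s(x, y), hxy, fun hadj => ?_⟩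
      rcases hsep with hsep | hsep
      · exact hsep (hxyS ▸ induce_pair_connected_of_adj hadj)
      · omega
  · rintro ⟨hG, e, he⟩
    induction e using Sym2.ind with | h u v => ?_
    refine le_antisymm (vertexConnectivity_le_card_sub_two he)
      (le_vertexConnectivity fun S hS => ?_)
    have h3 : 3 ≤ Sᶜ.ncard := by
      rw [Set.ncard_compl, Nat.card_eq_fintype_card]
      omega
    exact ⟨connected_induce_of_three_le_ncard hG h3, by omega⟩

end

section

variable {n : ℕ}

theorem compl_edgeSet_Knr (hn : 2 ≤ n) :
    (Knr n (n - 2))ᶜ.edgeSet = {s(⟨n - 2, by omega⟩, ⟨n - 1, by omega⟩)} := by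
  ext e
  induction e using Sym2.ind with | h x y => ?_
  have := x.isLt
  have := y.isLt
  simp only [Knr, mem_edgeSet, compl_adj, fromRel_adj, Set.mem_singleton_iff, Sym2.eq,
    Sym2.rel_iff', Prod.mk.injEq, Prod.swap_prod_mk, Fin.ext_iff]
  omega

theorem compl_edgeSet_KO2minusEdge (hn : 4 ≤ n) :
    (KO2minusEdge n)ᶜ.edgeSet =
      {s(⟨0, by omega⟩, ⟨1, by omega⟩), s(⟨n - 2, by omega⟩, ⟨n - 1, by omega⟩)} := by
  ext e
  induction e using Sym2.ind with | h x y => ?_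
  have := x.isLt
  have := y.isLt
  simp only [KO2minusEdge, mem_edgeSet, compl_adj, fromRel_adj, Set.mem_insert_iff,
    Set.mem_singleton_iff, Sym2.eq, Sym2.rel_iff', Prod.mk.injEq, Prod.swap_prod_mk, Fin.ext_iff]
  omega

theorem ncard_compl_edgeSet_KO2minusEdge (hn : 4 ≤ n) :
    (KO2minusEdge n)ᶜ.edgeSet.ncard = 2 := by
  rw [compl_edgeSet_KO2minusEdge hn, Set.ncard_pair]
  simp only [ne_eq, Sym2.eq, Sym2.rel_iff', Prod.mk.injEq, Prod.swap_prod_mk, Fin.ext_iff]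
  omega

theorem subsingleton_neighborSet_compl_KO2minusEdge (hn : 4 ≤ n) (v : Fin n) :
    ((KO2minusEdge n)ᶜ.neighborSet v).Subsingleton := by
  intro x hx y hy
  have hx' : s(v, x) ∈ (KO2minusEdge n)ᶜ.edgeSet := hx
  have hy' : s(v, y) ∈ (KO2minusEdge n)ᶜ.edgeSet := hy
  rw [compl_edgeSet_KO2minusEdge hn] at hx' hy'
  simp only [Set.mem_insert_iff, Set.mem_singleton_iff, Sym2.eq, Sym2.rel_iff', Prod.mk.injEq,
    Prod.swap_prod_mk, Fin.ext_iff] at hx' hy'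
  ext
  omega

theorem vertexConnectivity_KO2minusEdge (hn : 4 ≤ n) :
    vertexConnectivity (KO2minusEdge n) = n - 2 := by
  simpa using (vertexConnectivity_eq_card_sub_two_iff (by simp; omega)).2
    ⟨subsingleton_neighborSet_compl_KO2minusEdge hn,
      Set.nonempty_of_ncard_ne_zero (by simp [ncard_compl_edgeSet_KO2minusEdge hn])⟩

theorem not_nonempty_iso_KO2minusEdge_Knr (hn : 4 ≤ n) :
    ¬ Nonempty (KO2minusEdge n ≃g Knr n (n - 2)) := by
  rintro ⟨f⟩
  have h := f.compl.ncard_edgeSet_eq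
  rw [ncard_compl_edgeSet_KO2minusEdge hn, compl_edgeSet_Knr (by omega),
    Set.ncard_singleton] at h
  omega

variable {V : Type*} [Fintype V] {G : SimpleGraph V}

theorem nonempty_iso_Knr_of_ncard_compl_edgeSet_eq_one (hcard : Fintype.card V = n)
    (hn : 2 ≤ n) (h : Gᶜ.edgeSet.ncard = 1) : Nonempty (G ≃g Knr n (n - 2)) := by
  obtain ⟨e, he⟩ := Set.ncard_eq_one.1 h
  induction e using Sym2.ind with | h a b => ?_
  have hab : Gᶜ.Adj a b := show s(a, b) ∈ Gᶜ.edgeSet by simp [he]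
  refine nonempty_iso_of_compl_edgeSet_eq_image (M := {s(0, 1)}) (f := ![a, b])
    (g := ![⟨n - 2, by omega⟩, ⟨n - 1, by omega⟩]) (by simp [hcard]) ?_ ?_ ?_ ?_
  · simp only [Matrix.vecCons, Fin.cons_injective_iff]
    simp [hab.ne, Function.injective_of_subsingleton]
  · simp only [Matrix.vecCons, Fin.cons_injective_iff]
    simp [Fin.ext_iff, Function.injective_of_subsingleton]
    omega
  · simp [he]
  · simp [compl_edgeSet_Knr hn]

theorem nonempty_iso_KO2minusEdge_of_ncard_compl_edgeSet_eq_two (hcard : Fintype.card V = n)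
    (hn : 4 ≤ n) (hG : ∀ v, (Gᶜ.neighborSet v).Subsingleton) (h : Gᶜ.edgeSet.ncard = 2) :
    Nonempty (G ≃g KO2minusEdge n) := by
  obtain ⟨e₁, e₂, hne, he⟩ := Set.ncard_eq_two.1 h
  induction e₁ using Sym2.ind with | h a b => ?_
  induction e₂ using Sym2.ind with | h c d => ?_
  have hab : Gᶜ.Adj a b := show s(a, b) ∈ Gᶜ.edgeSet by simp [he]
  have hcd : Gᶜ.Adj c d := show s(c, d) ∈ Gᶜ.edgeSet by simp [he]
  obtain ⟨hac, had, hbc, hbd⟩ := ne_of_adj_of_adj hG hab hcd hne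
  refine nonempty_iso_of_compl_edgeSet_eq_image (M := {s(0, 1), s(2, 3)}) (f := ![a, b, c, d])
    (g := ![⟨0, by omega⟩, ⟨1, by omega⟩, ⟨n - 2, by omega⟩, ⟨n - 1, by omega⟩])
    (by simp [hcard]) ?_ ?_ ?_ ?_
  · simp only [Matrix.vecCons, Fin.cons_injective_iff]
    simp [hab.ne, hcd.ne, hac, had, hbc, hbd, Function.injective_of_subsingleton]
  · simp only [Matrix.vecCons, Fin.cons_injective_iff]
    simp [Fin.ext_iff, Function.injective_of_subsingleton]
    omega
  · simp [he, Set.image_pair]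
  · simp [compl_edgeSet_KO2minusEdge hn, Set.image_pair]

end

/-- For `n ≥ 4` and `r = n − 2`, a graph attaining the second maximum Harary index
among graphs of order `n` with vertex connectivity `n − 2` is obtained from
`K_{n-2} ∨ O_2` by deleting an edge inside `K_{n-2}`. -/
theorem harary_secondMax_vertexConnectivity_high (n : ℕ) (hn : 4 ≤ n)
    {V : Type*} [Fintype V] (G : SimpleGraph V) (hcard : Fintype.card V = n)
    (hconn : vertexConnectivity G = n - 2)
    (hne : ¬ Nonempty (G ≃g Knr n (n - 2)))
    (hmax : ∀ G' : SimpleGraph (Fin n), vertexConnectivity G' = n - 2 →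
      ¬ Nonempty (G' ≃g Knr n (n - 2)) → hararyIndex G' ≤ hararyIndex G) :
    Nonempty (G ≃g KO2minusEdge n) := by
  obtain ⟨hG, hE⟩ := (vertexConnectivity_eq_card_sub_two_iff (by omega)).1 (hcard ▸ hconn)
  have hle : Gᶜ.edgeSet.ncard ≤ 2 := by
    have h := hmax _ (vertexConnectivity_KO2minusEdge hn) (not_nonempty_iso_KO2minusEdge_Knr hn)
    rw [hararyIndex_eq_of_subsingleton_neighborSet_compl
        (subsingleton_neighborSet_compl_KO2minusEdge hn) (by simp; omega),
      hararyIndex_eq_of_subsingleton_neighborSet_compl hG (by omega),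
      ncard_compl_edgeSet_KO2minusEdge hn, Fintype.card_fin, hcard] at h
    have : (Gᶜ.edgeSet.ncard : ℝ) ≤ 2 := by linarith
    exact_mod_cast this
  have hge : 2 ≤ Gᶜ.edgeSet.ncard := by
    have := (Set.ncard_pos (Set.toFinite _)).2 hE
    by_contra! hlt
    exact hne (nonempty_iso_Knr_of_ncard_compl_edgeSet_eq_one hcard (by omega) (by omega))
  exact nonempty_iso_KO2minusEdge_of_ncard_compl_edgeSet_eq_two hcard hn hG (le_antisymm hle hge)
end

section
/- Let n and r be integers with 1 ≤ r ≤ n − 4. Then H(G_{n−r−2,2,r}) = (n² − 3n + 2r + 4)/2. -/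
open SimpleGraph

/-- Which of the three parts a vertex of `Fin a ⊕ Fin b ⊕ Fin c` lies in. -/
def triPart {a b c : ℕ} : Fin a ⊕ Fin b ⊕ Fin c → ℕ :=
  Sum.elim (fun _ => 0) (Sum.elim (fun _ => 1) (fun _ => 2))

/-- The graph `G_{a,b,c} = (K_a ∪ K_b) ∨ K_c`: the join of the disjoint union of the
complete graphs `K_a` and `K_b` with the complete graph `K_c`. -/
def GJoin (a b c : ℕ) : SimpleGraph (Fin a ⊕ Fin b ⊕ Fin c) :=
  SimpleGraph.fromRel (fun x y =>
    triPart x = triPart y ∨ triPart x = 2 ∨ triPart y = 2)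

open Sum

lemma ite_ite {p : Prop} [Decidable p] (x y z : ℝ) :
    (if p then x else if p then y else z) = if p then x else z := by
  split_ifs <;> rfl
open scoped Classical

lemma GJoin_adj {a b c : ℕ} (x y : Fin a ⊕ Fin b ⊕ Fin c) :
    (GJoin a b c).Adj x y ↔
      x ≠ y ∧ (triPart x = triPart y ∨ triPart x = 2 ∨ triPart y = 2) := by
  simp only [GJoin, SimpleGraph.fromRel_adj]
  tauto

lemma GJoin_dist {a b c : ℕ} (hc : 0 < c) (x y : Fin a ⊕ Fin b ⊕ Fin c) :
    (GJoin a b c).dist x y =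
      if x = y then 0 else if (GJoin a b c).Adj x y then 1 else 2 := by
  split_ifs with h1 h2
  · subst h1; exact SimpleGraph.dist_self
  · exact SimpleGraph.dist_eq_one_iff_adj.2 h2
  · have hx2 : triPart x ≠ 2 := by
      intro h
      exact h2 ((GJoin_adj x y).2 ⟨h1, Or.inr (Or.inl h)⟩)
    have hy2 : triPart y ≠ 2 := by
      intro h
      exact h2 ((GJoin_adj x y).2 ⟨h1, Or.inr (Or.inr h)⟩)
    set z : Fin a ⊕ Fin b ⊕ Fin c := inr (inr ⟨0, hc⟩) with hz
    have hz2 : triPart z = 2 := rfl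
    have hxz : (GJoin a b c).Adj x z := by
      refine (GJoin_adj x z).2 ⟨?_, Or.inr (Or.inr hz2)⟩
      intro h; exact hx2 (by rw [h, hz2])
    have hzy : (GJoin a b c).Adj z y := by
      refine (GJoin_adj z y).2 ⟨?_, Or.inr (Or.inl hz2)⟩
      intro h; exact hy2 (by rw [← h, hz2])
    have hle : (GJoin a b c).dist x y ≤ 2 := by
      simpa using SimpleGraph.dist_le (SimpleGraph.Walk.cons hxz hzy.toWalk)
    have hpos : 0 < (GJoin a b c).dist x y :=
      (SimpleGraph.Reachable.pos_dist_of_ne ⟨SimpleGraph.Walk.cons hxz hzy.toWalk⟩ h1)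
    have hne1 : (GJoin a b c).dist x y ≠ 1 := by
      intro h
      exact h2 (SimpleGraph.dist_eq_one_iff_adj.1 h)
    omega

lemma sum_offdiag (k : ℕ) :
    ∑ i : Fin k, ∑ j : Fin k, (if i = j then (0:ℝ) else 1) = (k:ℝ)^2 - k := by
  have h : ∀ i : Fin k, ∑ j : Fin k, (if i = j then (0:ℝ) else 1) = (k:ℝ) - 1 := by
    intro i
    have : ∀ j : Fin k, (if i = j then (0:ℝ) else 1) = 1 - (if i = j then (1:ℝ) else 0) := by
      intro j; by_cases h : i = j <;> simp [h]
    rw [Finset.sum_congr rfl (fun j _ => this j), Finset.sum_sub_distrib,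
      Finset.sum_const, Finset.sum_ite_eq]
    simp
  rw [Finset.sum_congr rfl (fun i _ => h i), Finset.sum_const]
  simp; ring

/-- For `1 ≤ r ≤ n − 4`, `H(G_{n-r-2,2,r}) = (n² − 3n + 2r + 4)/2`. -/
theorem harary_GJoin_value (n r : ℕ) (hr : 1 ≤ r) (hrn : r + 4 ≤ n) :
    hararyIndex (GJoin (n - r - 2) 2 r) =
      ((n : ℝ) ^ 2 - 3 * n + 2 * r + 4) / 2 := by
  set a := n - r - 2 with ha
  have hc : 0 < r := hr
  have key : ∀ x y, (1:ℝ) / ((GJoin a 2 r).dist x y) =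
      if x = y then 0 else if (GJoin a 2 r).Adj x y then 1 else 1/2 := by
    intro x y
    rw [GJoin_dist hc]
    split_ifs <;> norm_num
  unfold hararyIndex
  simp only [key]
  rw [Fintype.sum_sum_type]
  simp only [Fintype.sum_sum_type]
  simp only [GJoin_adj, triPart, Sum.elim_inl, Sum.elim_inr, ne_eq, Sum.inl.injEq,
    Sum.inr.injEq, reduceCtorEq]
  norm_num
  simp only [ite_ite, Finset.sum_add_distrib, sum_offdiag, Finset.sum_const,
    Finset.card_univ, Fintype.card_fin, nsmul_eq_mul]
  have haR : (a:ℝ) = (n:ℝ) - r - 2 := by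
    have h : a + (r+2) = n := by omega
    have := congrArg (Nat.cast : ℕ → ℝ) h
    push_cast at this
    linarith
  rw [haR]
  ring
end
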